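/- arXiv:2003.13777 — 2 statements merged into one kernel-verified Lean document; each statement's English description precedes it below -/
import Mathlib

section
/- Let T be a tree, let k ≥ 1, and let (A₁,B₁), …, (A_k,B_k) be pairwise independent (≤2)-separations of T chosen, among all families of k pairwise independent (≤2)-separations of T, so as to minimise Σᵢ |V(Aᵢ)|. Then for each i there is a vertex vᵢ with V(Aᵢ) \ V(Bᵢ) = {vᵢ} and N_T(vᵢ) = V(Aᵢ) ∩ V(Bᵢ) (so vᵢ has degree at most 2 in T), and {v₁, …, v_k} is a stable set in T. -/
/-
Replacing one separation `(Aᵢ, Bᵢ)` of the family by the star separation `(N[v], T - v)` at a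
vertex `v ∈ V(Aᵢ) \ V(Bᵢ)` of degree at most 2 keeps the family independent, because every edge
of the star lies in `Aᵢ⁻`; so minimality gives `|V(Aᵢ)| ≤ deg v + 1`. In a tree, a vertex `x` of
`V(Aᵢ) \ V(Bᵢ)` farthest from some `s ∈ V(Aᵢ) ∩ V(Bᵢ)` has all its neighbours except the one
towards `s` in `(V(Aᵢ) ∩ V(Bᵢ)) \ {s}`, so `deg x ≤ |V(Aᵢ) ∩ V(Bᵢ)|`. Together with
`|V(Aᵢ)| = |V(Aᵢ) \ V(Bᵢ)| + |V(Aᵢ) ∩ V(Bᵢ)|` this forces `V(Aᵢ) \ V(Bᵢ) = {x}` and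
`N(x) = V(Aᵢ) ∩ V(Bᵢ)`. Finally, an edge `vᵢvⱼ` would lie in both `Aᵢ⁻` and `Aⱼ⁻`.
-/

open SimpleGraph

/-- `(A, B)` is a `k`-separation of `H`: edge-disjoint subgraphs whose union is `H`,
with `V(A) \ V(B)` and `V(B) \ V(A)` nonempty and `|V(A) ∩ V(B)| = k`. -/
def IsSeparation {V : Type*} (H : SimpleGraph V) (A B : H.Subgraph) (k : ℕ) : Prop :=
  Disjoint A.edgeSet B.edgeSet ∧ A ⊔ B = ⊤ ∧
    (A.verts \ B.verts).Nonempty ∧ (B.verts \ A.verts).Nonempty ∧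
    (A.verts ∩ B.verts).ncard = k

/-- `(A, B)` is a `(≤2)`-separation of `H`. -/
def IsSepLE2 {V : Type*} (H : SimpleGraph V) (A B : H.Subgraph) : Prop :=
  ∃ k ≤ 2, IsSeparation H A B k

/-- The edge set of `A⁻`: the edges of `A` except those joining two vertices
of `V(A) ∩ V(B)`. -/
def sepMinusEdges {V : Type*} {H : SimpleGraph V} (A B : H.Subgraph) : Set (Sym2 V) :=
  {e | e ∈ A.edgeSet ∧ ¬ ∀ v ∈ e, v ∈ A.verts ∩ B.verts}

/-- Separations `(A,B)` and `(C,D)` are independent. -/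
def IndepSeps {V : Type*} {H : SimpleGraph V} (A B C D : H.Subgraph) : Prop :=
  sepMinusEdges A B ∩ sepMinusEdges C D = ∅ ∧
    (A.verts \ B.verts) ∩ (C.verts \ D.verts) = ∅

/-- `β(T)`: the maximum size of a stable set in the subgraph of `T` induced by the
vertices of degree at most 2. -/
noncomputable def beta {V : Type*} (T : SimpleGraph V) : ℕ :=
  sSup {n | ∃ S : Set V, S.ncard = n ∧ (∀ v ∈ S, (T.neighborSet v).ncard ≤ 2) ∧
    (∀ u ∈ S, ∀ w ∈ S, ¬ T.Adj u w)}


namespace SimpleGraph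

variable {V : Type*} {G : SimpleGraph V}

lemma IsTree.exists_forall_adj_eq_or_dist_lt (hG : G.IsTree) (b x : V) :
    ∃ p, ∀ y, G.Adj x y → y = p ∨ G.dist b x < G.dist b y := by
  classical
  obtain ⟨P, hP, -⟩ := hG.connected.exists_path_of_dist b x
  refine ⟨P.penultimate, fun y hxy => ?_⟩
  rcases hG.dist_eq_dist_add_one_of_adj b hxy with hx | hy
  · left
    obtain ⟨Q, hQ, hQlen⟩ := hG.connected.exists_path_of_dist b y
    have hxQ : x ∉ Q.support := fun hxQ => by
      have := dist_le (Q.takeUntil x hxQ)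
      have := Q.length_takeUntil_le_length hxQ
      omega
    exact hG.isAcyclic.eq_penultimate_of_adj_end hP hxy
      (hG.isAcyclic.mem_support_of_ne_mem_support_of_adj_of_isPath hP hQ hxy hxQ)
  · exact Or.inr (by omega)

def starSubgraph (G : SimpleGraph V) (v : V) : G.Subgraph where
  verts := insert v (G.neighborSet v)
  Adj a b := G.Adj a b ∧ (a = v ∨ b = v)
  adj_sub h := h.1
  edge_vert {a b} h := by
    rcases h.2 with rfl | rfl
    · exact Set.mem_insert _ _
    · exact Set.mem_insert_of_mem _ h.1.symm
  symm := ⟨fun _ _ h => ⟨h.1.symm, h.2.symm⟩⟩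

@[simp]
lemma starSubgraph_verts (v : V) : (G.starSubgraph v).verts = insert v (G.neighborSet v) := rfl

@[simp]
lemma starSubgraph_adj {v a b : V} : (G.starSubgraph v).Adj a b ↔ G.Adj a b ∧ (a = v ∨ b = v) :=
  Iff.rfl

lemma starSubgraph_sup_deleteVerts (v : V) :
    G.starSubgraph v ⊔ (⊤ : G.Subgraph).deleteVerts {v} = ⊤ := by
  ext a b
  · simp only [Subgraph.verts_sup, starSubgraph_verts, Subgraph.verts_top, Set.mem_union,
      Set.mem_insert_iff, Subgraph.induce_verts, Set.mem_sdiff, Set.mem_univ, true_and, iff_true]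
    exact (em (a = v)).imp_left Or.inl
  · simp only [Subgraph.sup_adj, starSubgraph_adj, Subgraph.induce_adj, Subgraph.top_adj,
      Subgraph.verts_top, Set.mem_sdiff, Set.mem_univ, Set.mem_singleton_iff, true_and]
    tauto

lemma disjoint_starSubgraph_deleteVerts (v : V) :
    Disjoint (G.starSubgraph v).edgeSet ((⊤ : G.Subgraph).deleteVerts {v}).edgeSet := by
  rw [Set.disjoint_left]
  rintro ⟨a, b⟩ ⟨-, hab⟩ ⟨⟨-, ha⟩, ⟨-, hb⟩, -⟩
  exact hab.elim ha hb

lemma starSubgraph_verts_sdiff_deleteVerts (v : V) :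
    (G.starSubgraph v).verts \ ((⊤ : G.Subgraph).deleteVerts {v}).verts = {v} := by
  ext x
  simp only [starSubgraph_verts, Subgraph.induce_verts, Subgraph.verts_top, Set.mem_sdiff,
    Set.mem_insert_iff, Set.mem_univ, true_and, not_not, and_iff_right_iff_imp]
  exact Or.inl

lemma starSubgraph_verts_inter_deleteVerts (v : V) :
    (G.starSubgraph v).verts ∩ ((⊤ : G.Subgraph).deleteVerts {v}).verts = G.neighborSet v := by
  ext x
  simp only [starSubgraph_verts, Subgraph.deleteVerts_verts, Subgraph.verts_top, Set.mem_inter_iff,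
    Set.mem_insert_iff, Set.mem_sdiff, Set.mem_univ, Set.mem_singleton_iff, mem_neighborSet, true_and]
  constructor
  · rintro ⟨rfl | hx, hne⟩
    · exact absurd rfl hne
    · exact hx
  · exact fun hx => ⟨Or.inr hx, (G.ne_of_adj hx).symm⟩

lemma isSeparation_starSubgraph_deleteVerts {v w : V} (hw : w ∉ insert v (G.neighborSet v)) :
    IsSeparation G (G.starSubgraph v) ((⊤ : G.Subgraph).deleteVerts {v}) (G.neighborSet v).ncard := by
  refine ⟨disjoint_starSubgraph_deleteVerts v, starSubgraph_sup_deleteVerts v, ?_, ⟨w, ?_, hw⟩,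
    by rw [starSubgraph_verts_inter_deleteVerts]⟩
  · rw [starSubgraph_verts_sdiff_deleteVerts]
    exact Set.singleton_nonempty v
  · simp only [Subgraph.deleteVerts_verts, Subgraph.verts_top, Set.mem_sdiff, Set.mem_univ,
      Set.mem_singleton_iff, true_and]
    rintro rfl
    exact hw (Set.mem_insert _ _)

lemma ncard_starSubgraph_verts [Finite V] (v : V) :
    (G.starSubgraph v).verts.ncard = (G.neighborSet v).ncard + 1 :=
  Set.ncard_insert_of_notMem (G.loopless.irrefl v)

namespace Subgraph

variable {A B : G.Subgraph}

lemma adj_of_mem_sdiff (hAB : A ⊔ B = ⊤) {x y : V} (hx : x ∈ A.verts \ B.verts) (h : G.Adj x y) :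
    A.Adj x y := by
  rw [← top_adj, ← hAB, sup_adj] at h
  exact h.resolve_right fun hB => hx.2 hB.fst_mem

lemma mk_mem_sepMinusEdges (hAB : A ⊔ B = ⊤) {x y : V} (hx : x ∈ A.verts \ B.verts)
    (h : G.Adj x y) : s(x, y) ∈ sepMinusEdges A B :=
  ⟨adj_of_mem_sdiff hAB hx h, fun hall => hx.2 (hall x (Sym2.mem_mk_left x y)).2⟩

lemma starSubgraph_sepMinusEdges_subset (hAB : A ⊔ B = ⊤) {v : V} (hv : v ∈ A.verts \ B.verts) :
    sepMinusEdges (G.starSubgraph v) ((⊤ : G.Subgraph).deleteVerts {v}) ⊆ sepMinusEdges A B := by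
  rintro ⟨a, b⟩ ⟨⟨hab, rfl | rfl⟩, -⟩
  · exact mk_mem_sepMinusEdges hAB hv hab
  · have := mk_mem_sepMinusEdges hAB hv hab.symm
    rwa [Sym2.eq_swap] at this

end Subgraph

end SimpleGraph

section

variable {V : Type*} {G : SimpleGraph V}

lemma IsSepLE2.sup_eq_top {A B : G.Subgraph} (h : IsSepLE2 G A B) : A ⊔ B = ⊤ := by
  obtain ⟨_, -, -, hAB, -⟩ := h
  exact hAB

lemma IsSepLE2.ncard_inter_le_two {A B : G.Subgraph} (h : IsSepLE2 G A B) :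
    (A.verts ∩ B.verts).ncard ≤ 2 := by
  obtain ⟨_, hk, -, -, -, -, rfl⟩ := h
  exact hk

lemma IndepSeps.symm {A B C D : G.Subgraph} (h : IndepSeps A B C D) : IndepSeps C D A B :=
  ⟨Set.inter_comm _ _ ▸ h.1, Set.inter_comm _ _ ▸ h.2⟩

lemma IndepSeps.mono_left {A B A' B' C D : G.Subgraph} (h : IndepSeps A B C D)
    (hE : sepMinusEdges A' B' ⊆ sepMinusEdges A B) (hV : A'.verts \ B'.verts ⊆ A.verts \ B.verts) :
    IndepSeps A' B' C D :=
  ⟨Set.subset_empty_iff.1 (h.1 ▸ Set.inter_subset_inter_left _ hE),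
    Set.subset_empty_iff.1 (h.2 ▸ Set.inter_subset_inter_left _ hV)⟩

lemma IndepSeps.not_adj {A B C D : G.Subgraph} (h : IndepSeps A B C D) (hAB : A ⊔ B = ⊤)
    (hCD : C ⊔ D = ⊤) {x y : V} (hx : x ∈ A.verts \ B.verts) (hy : y ∈ C.verts \ D.verts) :
    ¬ G.Adj x y := fun hxy => by
  have hxA := Subgraph.mk_mem_sepMinusEdges hAB hx hxy
  have hyC := Subgraph.mk_mem_sepMinusEdges hCD hy hxy.symm
  rw [Sym2.eq_swap] at hyC
  exact (Set.eq_empty_iff_forall_notMem.1 h.1) _ ⟨hxA, hyC⟩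

lemma IsSeparation.inter_nonempty {A B : G.Subgraph} {k : ℕ} (h : IsSeparation G A B k)
    (hG : G.Connected) : (A.verts ∩ B.verts).Nonempty := by
  obtain ⟨-, hAB, ⟨x, hx⟩, ⟨y, hyB, hyA⟩, -⟩ := h
  obtain ⟨d, -, hd₁, hd₂⟩ := (hG x y).some.exists_boundary_dart _ hx fun hy => hyA hy.1
  have hdA := (Subgraph.adj_of_mem_sdiff hAB hd₁ d.adj).snd_mem
  exact ⟨d.snd, hdA, by_contra fun hdB => hd₂ ⟨hdA, hdB⟩⟩

lemma IsSeparation.exists_ncard_neighborSet_le [Finite V] (hG : G.IsTree) {A B : G.Subgraph}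
    {k : ℕ} (h : IsSeparation G A B k) : ∃ x ∈ A.verts \ B.verts, (G.neighborSet x).ncard ≤ k := by
  obtain ⟨s₀, hs₀⟩ := h.inter_nonempty hG.connected
  obtain ⟨-, hAB, hX, -, hS⟩ := h
  obtain ⟨x, hxX, hxmax⟩ := Set.exists_max_image _ (G.dist s₀) (Set.toFinite _) hX
  obtain ⟨p, hp⟩ := hG.exists_forall_adj_eq_or_dist_lt s₀ x
  refine ⟨x, hxX, ?_⟩
  have hN : G.neighborSet x ⊆ insert p ((A.verts ∩ B.verts) \ {s₀}) := by
    intro y hy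
    rcases hp y hy with rfl | hlt
    · exact Set.mem_insert _ _
    · have hyA := (Subgraph.adj_of_mem_sdiff hAB hxX hy).snd_mem
      refine Set.mem_insert_of_mem _ ⟨⟨hyA, by_contra fun hyB => ?_⟩, ?_⟩
      · exact (hxmax y ⟨hyA, hyB⟩).not_gt hlt
      · rintro rfl
        simp at hlt
  calc (G.neighborSet x).ncard ≤ (insert p ((A.verts ∩ B.verts) \ {s₀})).ncard :=
        Set.ncard_le_ncard hN
    _ ≤ ((A.verts ∩ B.verts) \ {s₀}).ncard + 1 := Set.ncard_insert_le _ _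
    _ = k := by
        rw [Set.ncard_sdiff_singleton_of_mem hs₀, hS]
        have := (Set.ncard_pos (Set.toFinite _)).2 ⟨s₀, hs₀⟩
        omega

lemma sum_ncard_verts_update {k : ℕ} (A : Fin k → G.Subgraph) (i : Fin k) (A₀ : G.Subgraph) :
    ∑ j, (Function.update A i A₀ j).verts.ncard + (A i).verts.ncard =
      ∑ j, (A j).verts.ncard + A₀.verts.ncard := by
  simp_rw [Function.apply_update (fun _ (H : G.Subgraph) => H.verts.ncard),
    Finset.sum_update_of_mem (Finset.mem_univ i), ← Finset.add_sum_erase _ _ (Finset.mem_univ i),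
    Finset.sdiff_singleton_eq_erase]
  ring

def IsIndepSepFamily (G : SimpleGraph V) {k : ℕ} (A B : Fin k → G.Subgraph) : Prop :=
  (∀ i, IsSepLE2 G (A i) (B i)) ∧ ∀ i j, i ≠ j → IndepSeps (A i) (B i) (A j) (B j)

namespace IsIndepSepFamily

variable {k : ℕ} {A B : Fin k → G.Subgraph}

lemma update (h : IsIndepSepFamily G A B) (i : Fin k) {A₀ B₀ : G.Subgraph}
    (h₀ : IsSepLE2 G A₀ B₀) (hind₀ : ∀ j ≠ i, IndepSeps A₀ B₀ (A j) (B j)) :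
    IsIndepSepFamily G (Function.update A i A₀) (Function.update B i B₀) := by
  refine ⟨fun j => ?_, fun j l hjl => ?_⟩
  · rcases eq_or_ne j i with rfl | hj
    · simpa using h₀
    · simpa [Function.update_of_ne hj] using h.1 j
  · rcases eq_or_ne j i with rfl | hj
    · simpa [Function.update_of_ne hjl.symm] using hind₀ l hjl.symm
    rcases eq_or_ne l i with rfl | hl
    · simpa [Function.update_of_ne hj] using (hind₀ j hj).symm
    · simpa [Function.update_of_ne hj, Function.update_of_ne hl] using h.2 j l hjl

end IsIndepSepFamily

def IsMinIndepSepFamily (G : SimpleGraph V) {k : ℕ} (A B : Fin k → G.Subgraph) : Prop :=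
  IsIndepSepFamily G A B ∧ ∀ A' B' : Fin k → G.Subgraph, IsIndepSepFamily G A' B' →
    ∑ i, (A i).verts.ncard ≤ ∑ i, (A' i).verts.ncard

namespace IsMinIndepSepFamily

variable {k : ℕ} {A B : Fin k → G.Subgraph}

lemma ncard_verts_le_of_update (h : IsMinIndepSepFamily G A B) {i : Fin k} {A₀ B₀ : G.Subgraph}
    (h₀ : IsSepLE2 G A₀ B₀) (hind₀ : ∀ j ≠ i, IndepSeps A₀ B₀ (A j) (B j)) :
    (A i).verts.ncard ≤ A₀.verts.ncard := by
  have := h.2 _ _ (h.1.update i h₀ hind₀)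
  have := sum_ncard_verts_update A i A₀
  omega

variable [Finite V]

lemma ncard_verts_le_ncard_neighborSet_add_one (h : IsMinIndepSepFamily G A B) {i : Fin k} {v : V}
    (hv : v ∈ (A i).verts \ (B i).verts) (hdeg : (G.neighborSet v).ncard ≤ 2) :
    (A i).verts.ncard ≤ (G.neighborSet v).ncard + 1 := by
  obtain ⟨_, -, -, hAB, -, ⟨w, -, hwA⟩, -⟩ := h.1.1 i
  have hw : w ∉ insert v (G.neighborSet v) := by
    rintro (rfl | hw)
    · exact hwA hv.1
    · exact hwA (Subgraph.adj_of_mem_sdiff hAB hv hw).snd_mem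
  rw [← ncard_starSubgraph_verts]
  refine h.ncard_verts_le_of_update ⟨_, hdeg, isSeparation_starSubgraph_deleteVerts hw⟩
    fun j hj => (h.1.2 i j hj.symm).mono_left (Subgraph.starSubgraph_sepMinusEdges_subset hAB hv) ?_
  rw [starSubgraph_verts_sdiff_deleteVerts]
  exact Set.singleton_subset_iff.2 hv

lemma exists_sdiff_eq_singleton_and_neighborSet_eq (h : IsMinIndepSepFamily G A B) (hG : G.IsTree) (i : Fin k) :
    ∃ v, (A i).verts \ (B i).verts = {v} ∧ G.neighborSet v = (A i).verts ∩ (B i).verts := by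
  obtain ⟨s, hs, hsep⟩ := h.1.1 i
  obtain ⟨x, hxX, hx⟩ := hsep.exists_ncard_neighborSet_le hG
  have hA := h.ncard_verts_le_ncard_neighborSet_add_one hxX (hx.trans hs)
  have hsplit := Set.ncard_inter_add_ncard_sdiff_eq_ncard (A i).verts (B i).verts
  have hX := (Set.ncard_pos (Set.toFinite _)).2 ⟨x, hxX⟩
  obtain ⟨-, hAB, -, -, hS⟩ := hsep
  obtain ⟨v, hv⟩ := Set.ncard_eq_one.1 (show ((A i).verts \ (B i).verts).ncard = 1 by omega)
  obtain rfl : x = v := by rw [hv] at hxX; exact hxX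
  have hN : G.neighborSet x ⊆ (A i).verts ∩ (B i).verts := by
    intro y hy
    have hyA := (Subgraph.adj_of_mem_sdiff hAB hxX hy).snd_mem
    refine ⟨hyA, by_contra fun hyB => G.ne_of_adj hy ?_⟩
    exact (hv ▸ ⟨hyA, hyB⟩ : y ∈ ({x} : Set V)).symm
  exact ⟨x, hv, Set.eq_of_subset_of_ncard_le hN (by omega)⟩

end IsMinIndepSepFamily

end

theorem stmt3_general {V : Type*} [Fintype V] (T : SimpleGraph V) (hT : T.IsTree)
    (k : ℕ) (A B : Fin k → T.Subgraph)
    (hsep : ∀ i, IsSepLE2 T (A i) (B i))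
    (hind : ∀ i j, i ≠ j → IndepSeps (A i) (B i) (A j) (B j))
    (hmin : ∀ A' B' : Fin k → T.Subgraph,
      (∀ i, IsSepLE2 T (A' i) (B' i)) →
      (∀ i j, i ≠ j → IndepSeps (A' i) (B' i) (A' j) (B' j)) →
      ∑ i, (A i).verts.ncard ≤ ∑ i, (A' i).verts.ncard) :
    ∃ v : Fin k → V,
      (∀ i, (A i).verts \ (B i).verts = {v i}) ∧
      (∀ i, T.neighborSet (v i) = (A i).verts ∩ (B i).verts) ∧
      (∀ i, (T.neighborSet (v i)).ncard ≤ 2) ∧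
      (∀ i j, ¬ T.Adj (v i) (v j)) := by
  have hfam : IsMinIndepSepFamily T A B := ⟨⟨hsep, hind⟩, fun A' B' h => hmin A' B' h.1 h.2⟩
  choose v hvX hvN using hfam.exists_sdiff_eq_singleton_and_neighborSet_eq hT
  refine ⟨v, hvX, hvN, fun i => hvN i ▸ (hsep i).ncard_inter_le_two, fun i j => ?_⟩
  have hv : ∀ l, v l ∈ (A l).verts \ (B l).verts := fun l => hvX l ▸ rfl
  rcases eq_or_ne i j with rfl | hij
  · exact T.loopless.irrefl (v i)
  · exact (hind i j hij).not_adj (hsep i).sup_eq_top (hsep j).sup_eq_top (hv i) (hv j)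

/-- If `(A₁,B₁), …, (A_k,B_k)` are pairwise independent `(≤2)`-separations of a tree `T`
minimising `Σᵢ |V(Aᵢ)|` among all such families of size `k`, then each `V(Aᵢ) \ V(Bᵢ)` is a
single vertex `vᵢ` with `N_T(vᵢ) = V(Aᵢ) ∩ V(Bᵢ)` (so `vᵢ` has degree at most 2 in `T`),
and `{v₁, …, v_k}` is a stable set in `T`. -/
theorem stmt3 {V : Type*} [Fintype V] (T : SimpleGraph V) (hT : T.IsTree)
    (k : ℕ) (hk : 1 ≤ k) (A B : Fin k → T.Subgraph)
    (hsep : ∀ i, IsSepLE2 T (A i) (B i))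
    (hind : ∀ i j, i ≠ j → IndepSeps (A i) (B i) (A j) (B j))
    (hmin : ∀ A' B' : Fin k → T.Subgraph,
      (∀ i, IsSepLE2 T (A' i) (B' i)) →
      (∀ i j, i ≠ j → IndepSeps (A' i) (B' i) (A' j) (B' j)) →
      ∑ i, (A i).verts.ncard ≤ ∑ i, (A' i).verts.ncard) :
    ∃ v : Fin k → V,
      (∀ i, (A i).verts \ (B i).verts = {v i}) ∧
      (∀ i, T.neighborSet (v i) = (A i).verts ∩ (B i).verts) ∧
      (∀ i, (T.neighborSet (v i)).ncard ≤ 2) ∧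
      (∀ i j, ¬ T.Adj (v i) (v j)) :=
  stmt3_general T hT k A B hsep hind hmin
end

section
/- Let H be a graph, let (A₁,B₁), …, (A_k,B_k) be pairwise independent (≤2)-separations of H, and let q ≥ 1 be an integer. Let G be the graph with vertex set V(H) ⊔ (⨆_{i=1}^{k} {1, …, q−1} × (V(Aᵢ) \ V(Bᵢ))) and with the following edges: all edges of H; for each i ∈ {1,…,k} and j ∈ {1,…,q−1}, an edge between (j,x) and (j,y) whenever x, y ∈ V(Aᵢ) \ V(Bᵢ) and xy ∈ E(Aᵢ); and an edge between (j,x) and z whenever x ∈ V(Aᵢ) \ V(Bᵢ), z ∈ V(Aᵢ) ∩ V(Bᵢ), and xz ∈ E(Aᵢ). Then |V(G)| ≤ q·|V(H)| and G contains at least q^k distinct subgraphs isomorphic to H. -/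
open SimpleGraph

/-!
For every choice `g` assigning to each separation `(Aᵢ, Bᵢ)` either the original or one of
the `q - 1` clones, replacing each `V(Aᵢ) \ V(Bᵢ)` by its chosen clone embeds `H` into `G`:
an edge of `H` leaving `V(Aᵢ) \ V(Bᵢ)` lies in `Aᵢ`, and independence forbids edges of `H`
between different sets `V(Aᵢ) \ V(Bᵢ)`. Since these sets are nonempty, the vertex set of the
resulting copy determines `g`, which gives `q ^ k` distinct copies. Since the sets are also
disjoint, a clone vertex `(i, j, x)` is determined by `(j, x) ∈ Fin (q - 1) × V(H)`, which
bounds `|V(G)|`.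
-/

open Function

section Cloning

variable {V ι C : Type*} {S : ι → Set V}

open Classical in
/-- `g i = none` keeps `S i` in place, `g i = some j` moves it onto its `j`-th clone. -/
noncomputable def cloneMap (S : ι → Set V) (g : ι → Option C) (v : V) : V ⊕ Σ i, C × S i :=
  if h : ∃ i j, v ∈ S i ∧ g i = some j then
    .inr ⟨h.choose, h.choose_spec.choose, v, h.choose_spec.choose_spec.1⟩
  else .inl v

def cloneBase : (V ⊕ Σ i, C × S i) → V
  | .inl v => v
  | .inr ⟨_, _, x⟩ => x

theorem cloneBase_cloneMap (g : ι → Option C) (v : V) : cloneBase (cloneMap S g v) = v := by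
  unfold cloneMap
  split_ifs <;> rfl

theorem cloneMap_injective (g : ι → Option C) : Injective (cloneMap S g) :=
  LeftInverse.injective (g := cloneBase) (cloneBase_cloneMap g)

theorem cloneMap_of_forall_ne {g : ι → Option C} {v : V}
    (h : ∀ i j, v ∈ S i → g i ≠ some j) : cloneMap S g v = .inl v :=
  dif_neg fun ⟨i, j, hv, hg⟩ => h i j hv hg

theorem cloneMap_of_mem (hS : Pairwise (Disjoint on S)) {g : ι → Option C} {v : V} {i : ι}
    {j : C} (hv : v ∈ S i) (hg : g i = some j) : cloneMap S g v = .inr ⟨i, j, v, hv⟩ := by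
  have hc : ∃ i j, v ∈ S i ∧ g i = some j := ⟨i, j, hv, hg⟩
  rw [cloneMap, dif_pos hc]
  obtain ⟨hv', hg'⟩ := hc.choose_spec.choose_spec
  obtain rfl : hc.choose = i := hS.eq (Set.not_disjoint_iff.2 ⟨v, hv', hv⟩)
  obtain rfl : hc.choose_spec.choose = j := Option.some.inj (hg'.symm.trans hg)
  rfl

theorem cloneMap_of_mem_of_eq_none (hS : Pairwise (Disjoint on S)) {g : ι → Option C} {v : V}
    {i : ι} (hv : v ∈ S i) (hg : g i = none) : cloneMap S g v = .inl v :=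
  cloneMap_of_forall_ne fun i' j hv' => by
    obtain rfl : i' = i := hS.eq (Set.not_disjoint_iff.2 ⟨v, hv', hv⟩)
    simp [hg]

theorem inr_mem_range_cloneMap_iff (hS : Pairwise (Disjoint on S)) {g : ι → Option C} {i : ι}
    {j : C} (x : S i) : .inr ⟨i, j, x⟩ ∈ Set.range (cloneMap S g) ↔ g i = some j := by
  refine ⟨fun ⟨u, hu⟩ => ?_, fun hg => ⟨x, cloneMap_of_mem hS x.2 hg⟩⟩
  obtain rfl : u = x := (cloneBase_cloneMap g u).symm.trans (congrArg cloneBase hu)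
  cases hg : g i with
  | none => simp [cloneMap_of_mem_of_eq_none hS x.2 hg] at hu
  | some j' => simpa [cloneMap_of_mem hS x.2 hg] using hu

theorem injective_range_cloneMap (hS : Pairwise (Disjoint on S)) (hne : ∀ i, (S i).Nonempty) :
    Injective fun g : ι → Option C => Set.range (cloneMap S g) := by
  intro g g' (h : Set.range _ = Set.range _)
  funext i
  obtain ⟨x, hx⟩ := hne i
  refine Option.ext fun j => ?_
  rw [← inr_mem_range_cloneMap_iff hS (⟨x, hx⟩ : S i), h, inr_mem_range_cloneMap_iff hS]

theorem card_sum_sigma_le [Finite V] [Finite C] (hS : Pairwise (Disjoint on S)) :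
    Nat.card (V ⊕ Σ i, C × S i) ≤ (Nat.card C + 1) * Nat.card V := by
  have hinj : Injective fun p : Σ i, C × S i => (p.2.1, (p.2.2 : V)) := by
    rintro ⟨i, j, x⟩ ⟨i', j', x'⟩ h
    obtain ⟨rfl, hx⟩ := Prod.mk.inj h
    obtain rfl : i = i' := hS.eq (Set.not_disjoint_iff.2 ⟨x, x.2, hx ▸ x'.2⟩)
    obtain rfl := Subtype.ext hx
    rfl
  have := Finite.of_injective _ hinj
  calc Nat.card (V ⊕ Σ i, C × S i)
      = Nat.card V + Nat.card (Σ i, C × S i) := Nat.card_sum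
    _ ≤ Nat.card V + Nat.card C * Nat.card V := by
      gcongr
      simpa only [Nat.card_prod] using Nat.card_le_card_of_injective _ hinj
    _ = (Nat.card C + 1) * Nat.card V := by ring

end Cloning

theorem SimpleGraph.Subgraph.adj_of_sup_eq_top_of_mem_sdiff {V : Type*} {H : SimpleGraph V}
    {A B : H.Subgraph} (hAB : A ⊔ B = ⊤) {u v : V} (hu : u ∈ A.verts \ B.verts)
    (h : H.Adj u v) : A.Adj u v := by
  have : (A ⊔ B).Adj u v := hAB ▸ h
  exact this.resolve_right fun hB => hu.2 hB.fst_mem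

theorem IndepSeps.not_adj_s11 {V : Type*} {H : SimpleGraph V} {A B C D : H.Subgraph}
    (hind : IndepSeps A B C D) (hAB : A ⊔ B = ⊤) (hCD : C ⊔ D = ⊤) {u v : V}
    (hu : u ∈ A.verts \ B.verts) (hv : v ∈ C.verts \ D.verts) : ¬ H.Adj u v := fun h => by
  have hA : s(u, v) ∈ sepMinusEdges A B :=
    ⟨Subgraph.adj_of_sup_eq_top_of_mem_sdiff hAB hu h, fun hall => hu.2 (hall u (by simp)).2⟩
  have hC : s(u, v) ∈ sepMinusEdges C D :=
    ⟨(Subgraph.adj_of_sup_eq_top_of_mem_sdiff hCD hv h.symm).symm,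
      fun hall => hv.2 (hall v (by simp)).2⟩
  simpa [hind.1] using Set.mem_inter hA hC

section Pasting

variable {V ι C : Type*} {H : SimpleGraph V} {A B : ι → H.Subgraph}
  {G : SimpleGraph (V ⊕ Σ i, C × ↥((A i).verts \ (B i).verts))}

theorem cloneMap_adj_of_mem (hsup : ∀ i, A i ⊔ B i = ⊤)
    (hind : Pairwise fun i i' => IndepSeps (A i) (B i) (A i') (B i'))
    (hG2 : ∀ i j (x y : ↥((A i).verts \ (B i).verts)), (A i).Adj x y →
      G.Adj (.inr ⟨i, j, x⟩) (.inr ⟨i, j, y⟩))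
    (hG4 : ∀ i j (x : ↥((A i).verts \ (B i).verts)) z, z ∈ (B i).verts → (A i).Adj x z →
      G.Adj (.inr ⟨i, j, x⟩) (.inl z))
    {g : ι → Option C} {u v : V} {i : ι} {j : C} (hu : u ∈ (A i).verts \ (B i).verts)
    (hg : g i = some j) (h : H.Adj u v) :
    G.Adj (.inr ⟨i, j, u, hu⟩) (cloneMap (fun i => (A i).verts \ (B i).verts) g v) := by
  have hS : Pairwise (Disjoint on fun i => (A i).verts \ (B i).verts) :=
    fun i i' h => Set.disjoint_iff_inter_eq_empty.2 (hind h).2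
  have huv := Subgraph.adj_of_sup_eq_top_of_mem_sdiff (hsup i) hu h
  by_cases hv : v ∈ (A i).verts \ (B i).verts
  · rw [cloneMap_of_mem hS hv hg]
    exact hG2 i j ⟨u, hu⟩ ⟨v, hv⟩ huv
  · have hvB : v ∈ (B i).verts := not_not.1 fun hvB => hv ⟨huv.snd_mem, hvB⟩
    rw [cloneMap_of_forall_ne fun i' j' hv' _ => ?_]
    · exact hG4 i j ⟨u, hu⟩ v hvB huv
    · have hii : i ≠ i' := by rintro rfl; exact hv hv'
      exact (hind hii).not_adj_s11 (hsup i) (hsup i') hu hv' h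

theorem cloneMap_adj (hsup : ∀ i, A i ⊔ B i = ⊤)
    (hind : Pairwise fun i i' => IndepSeps (A i) (B i) (A i') (B i'))
    (hG1 : ∀ z z', H.Adj z z' → G.Adj (.inl z) (.inl z'))
    (hG2 : ∀ i j (x y : ↥((A i).verts \ (B i).verts)), (A i).Adj x y →
      G.Adj (.inr ⟨i, j, x⟩) (.inr ⟨i, j, y⟩))
    (hG4 : ∀ i j (x : ↥((A i).verts \ (B i).verts)) z, z ∈ (B i).verts → (A i).Adj x z →
      G.Adj (.inr ⟨i, j, x⟩) (.inl z))
    (g : ι → Option C) {u v : V} (h : H.Adj u v) :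
    G.Adj (cloneMap (fun i => (A i).verts \ (B i).verts) g u)
      (cloneMap (fun i => (A i).verts \ (B i).verts) g v) := by
  have hS : Pairwise (Disjoint on fun i => (A i).verts \ (B i).verts) :=
    fun i i' h => Set.disjoint_iff_inter_eq_empty.2 (hind h).2
  by_cases hu : ∃ i j, u ∈ (A i).verts \ (B i).verts ∧ g i = some j
  · obtain ⟨i, j, hu, hg⟩ := hu
    rw [cloneMap_of_mem hS hu hg]
    exact cloneMap_adj_of_mem hsup hind hG2 hG4 hu hg h
  by_cases hv : ∃ i j, v ∈ (A i).verts \ (B i).verts ∧ g i = some j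
  · obtain ⟨i, j, hv, hg⟩ := hv
    rw [cloneMap_of_mem hS hv hg]
    exact (cloneMap_adj_of_mem hsup hind hG2 hG4 hv hg h.symm).symm
  simp only [not_exists, not_and] at hu hv
  rw [cloneMap_of_forall_ne hu, cloneMap_of_forall_ne hv]
  exact hG1 u v h

end Pasting

theorem le_card_subgraph_iso_of_injective {α β X : Type*} [Finite β] {A : SimpleGraph α}
    {B : SimpleGraph β} (c : X → A.Copy B) (hc : Injective fun x => Set.range (c x)) :
    Nat.card X ≤ Nat.card {B' : B.Subgraph // Nonempty (B'.coe ≃g A)} := by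
  refine Nat.card_le_card_of_injective
    (fun x => ⟨(c x).toSubgraph, ⟨(c x).isoToSubgraph.symm⟩⟩) fun x y h => hc ?_
  simpa [Subgraph.map_verts, Set.image_univ] using congrArg (·.1.verts) h

theorem stmt11_general {V : Type*} [Fintype V] (H : SimpleGraph V)
    (k : ℕ) (A B : Fin k → H.Subgraph)
    (hsep : ∀ i, IsSepLE2 H (A i) (B i))
    (hind : ∀ i j, i ≠ j → IndepSeps (A i) (B i) (A j) (B j))
    (q : ℕ) (hq : 1 ≤ q)
    (G : SimpleGraph (V ⊕ (Σ i : Fin k, Fin (q - 1) × ↥((A i).verts \ (B i).verts))))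
    (hG1 : ∀ z z' : V, G.Adj (Sum.inl z) (Sum.inl z') ↔ H.Adj z z')
    (hG2 : ∀ i : Fin k, ∀ j j' : Fin (q - 1),
      ∀ x y : ↥((A i).verts \ (B i).verts),
      G.Adj (Sum.inr ⟨i, j, x⟩) (Sum.inr ⟨i, j', y⟩) ↔ (j = j' ∧ (A i).Adj ↑x ↑y))
    (hG4 : ∀ z : V, ∀ i : Fin k, ∀ j : Fin (q - 1),
      ∀ x : ↥((A i).verts \ (B i).verts),
      G.Adj (Sum.inl z) (Sum.inr ⟨i, j, x⟩) ↔
        (z ∈ (A i).verts ∩ (B i).verts ∧ (A i).Adj ↑x z)) :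
    Nat.card (V ⊕ (Σ i : Fin k, Fin (q - 1) × ↥((A i).verts \ (B i).verts))) ≤
        q * Fintype.card V ∧
      q ^ k ≤ Nat.card {G' : G.Subgraph // Nonempty (G'.coe ≃g H)} := by
  have hS : Pairwise (Disjoint on fun i => (A i).verts \ (B i).verts) :=
    fun i i' h => Set.disjoint_iff_inter_eq_empty.2 (hind i i' h).2
  have hsup : ∀ i, A i ⊔ B i = ⊤ := fun i => (hsep i).choose_spec.2.2.1
  have hne : ∀ i, ((A i).verts \ (B i).verts).Nonempty :=
    fun i => (hsep i).choose_spec.2.2.2.1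
  refine ⟨?_, ?_⟩
  · simpa [Nat.sub_add_cancel hq] using card_sum_sigma_le (C := Fin (q - 1)) hS
  · let c g : H.Copy G := ⟨⟨cloneMap _ g, cloneMap_adj hsup hind (fun z z' => (hG1 z z').2)
      (fun i j x y h => (hG2 i j j x y).2 ⟨rfl, h⟩)
      (fun i j x z hz h => ((hG4 z i j x).2 ⟨⟨h.snd_mem, hz⟩, h⟩).symm) g⟩, cloneMap_injective g⟩
    calc q ^ k = Nat.card (Fin k → Option (Fin (q - 1))) := by
          simp [Nat.sub_add_cancel hq]
      _ ≤ _ := le_card_subgraph_iso_of_injective c (injective_range_cloneMap hS hne)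

/-- Pasting construction: let `(A₁,B₁), …, (A_k,B_k)` be pairwise independent
`(≤2)`-separations of `H` and `q ≥ 1`. Let `G` be the graph on
`V(H) ⊔ (⨆ᵢ {1,…,q−1} × (V(Aᵢ) \ V(Bᵢ)))` with the edges of `H`, the edges of `Aᵢ` inside
each clone of `V(Aᵢ) \ V(Bᵢ)`, and the edges of `Aᵢ` from each clone to `V(Aᵢ) ∩ V(Bᵢ)`.
Then `|V(G)| ≤ q|V(H)|` and `G` contains at least `q^k` distinct subgraphs isomorphic
to `H`. -/
theorem stmt11 {V : Type*} [Fintype V] (H : SimpleGraph V)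
    (k : ℕ) (A B : Fin k → H.Subgraph)
    (hsep : ∀ i, IsSepLE2 H (A i) (B i))
    (hind : ∀ i j, i ≠ j → IndepSeps (A i) (B i) (A j) (B j))
    (q : ℕ) (hq : 1 ≤ q)
    (G : SimpleGraph (V ⊕ (Σ i : Fin k, Fin (q - 1) × ↥((A i).verts \ (B i).verts))))
    (hG1 : ∀ z z' : V, G.Adj (Sum.inl z) (Sum.inl z') ↔ H.Adj z z')
    (hG2 : ∀ i : Fin k, ∀ j j' : Fin (q - 1),
      ∀ x y : ↥((A i).verts \ (B i).verts),
      G.Adj (Sum.inr ⟨i, j, x⟩) (Sum.inr ⟨i, j', y⟩) ↔ (j = j' ∧ (A i).Adj ↑x ↑y))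
    (hG3 : ∀ i i' : Fin k, i ≠ i' → ∀ j j' : Fin (q - 1),
      ∀ x : ↥((A i).verts \ (B i).verts), ∀ y : ↥((A i').verts \ (B i').verts),
      ¬ G.Adj (Sum.inr ⟨i, j, x⟩) (Sum.inr ⟨i', j', y⟩))
    (hG4 : ∀ z : V, ∀ i : Fin k, ∀ j : Fin (q - 1),
      ∀ x : ↥((A i).verts \ (B i).verts),
      G.Adj (Sum.inl z) (Sum.inr ⟨i, j, x⟩) ↔
        (z ∈ (A i).verts ∩ (B i).verts ∧ (A i).Adj ↑x z)) :
    Nat.card (V ⊕ (Σ i : Fin k, Fin (q - 1) × ↥((A i).verts \ (B i).verts))) ≤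
        q * Fintype.card V ∧
      q ^ k ≤ Nat.card {G' : G.Subgraph // Nonempty (G'.coe ≃g H)} :=
  stmt11_general H k A B hsep hind q hq G hG1 hG2 hG4
end
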